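/- Assume k(c) > 0 for all c ∈ [0,1]. Then for every c ∈ [0,1] and every x > β*(c) one has the closed-form expression F(x, c) = μΦ(c) + (x − μ) λΦ(c)/(λ + θ) + φ(x) ∫_c^1 ( G(β*(y); y)/φ(β*(y)) ) dy, and consequently (1/2)σ² F_{xx}(x, c) + θ(μ − x) F_x(x, c) − λ F(x, c) = −λ Φ(c) x for all x > β*(c). -/

import Mathlib

open MeasureTheory Real Set Filter

/-- The (positive multiple of the) strictly decreasing fundamental solution `φ_λ` of the
Ornstein–Uhlenbeck equation `(1/2)σ² f'' + θ(μ - x) f' = λ f`, written as the integral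
`φ(x) = ∫₀^∞ t^(λ/θ - 1) exp(-t²/2 - a t (x - μ)) dt` with `a = √(2θ)/σ`. -/
noncomputable def OUphi (lam th mu sig : ℝ) (x : ℝ) : ℝ :=
  ∫ t in Set.Ioi (0:ℝ),
    t ^ (lam / th - 1) * Real.exp (-t ^ 2 / 2 - Real.sqrt (2 * th) / sig * t * (x - mu))

/-- `k(c) = λ + θ + λ Φ'(c)`. -/
noncomputable def kfun (lam th : ℝ) (Phi : ℝ → ℝ) (c : ℝ) : ℝ :=
  lam + th + lam * deriv Phi c

/-- `G(x; c) = μ(k(c) - θ)/λ + k(c)(x - μ)/(λ + θ)`. -/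
noncomputable def Gfun (lam th mu : ℝ) (Phi : ℝ → ℝ) (x c : ℝ) : ℝ :=
  mu * (kfun lam th Phi c - th) / lam + kfun lam th Phi c * (x - mu) / (lam + th)

/-- `x₀(c) = -θμΦ'(c)/k(c)`. -/
noncomputable def x0fun (lam th mu : ℝ) (Phi : ℝ → ℝ) (c : ℝ) : ℝ :=
  -(th * mu * deriv Phi c) / kfun lam th Phi c

/-- The smooth-fit function `H(x;c) = (k(c)/(λ+θ)) φ(x) - G(x;c) φ'(x)`. -/
noncomputable def Hfun (lam th mu sig : ℝ) (Phi : ℝ → ℝ) (x c : ℝ) : ℝ :=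
  kfun lam th Phi c / (lam + th) * OUphi lam th mu sig x
    - Gfun lam th mu Phi x c * deriv (OUphi lam th mu sig) x

/-- The candidate value function of the optimal stopping problem:
`u(x;c) = G(x;c) - (G(β;c)/φ(β)) φ(x)` for `x > β` and `u(x;c) = 0` for `x ≤ β`. -/
noncomputable def ufun (lam th mu sig : ℝ) (Phi : ℝ → ℝ) (b : ℝ) (x c : ℝ) : ℝ :=
  if b < x then
    Gfun lam th mu Phi x c
      - Gfun lam th mu Phi b c / OUphi lam th mu sig b * OUphi lam th mu sig x
  else 0

/-- The candidate value function of the control problem: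
`F(x,c) = x(1-c) - ∫_c^1 u(x;y) dy`, where `u(·;y)` uses the boundary `β(y)`. -/
noncomputable def Ffun (lam th mu sig : ℝ) (Phi : ℝ → ℝ) (beta : ℝ → ℝ) (x c : ℝ) : ℝ :=
  x * (1 - c) - ∫ y in c..(1:ℝ), ufun lam th mu sig Phi (beta y) x y

/-!
Write `φ(x) = M_{λ/θ-1}(a(x - μ))` with `M_p(b) = ∫₀^∞ t^p exp(-t²/2 - bt) dt`. Differentiating
under the integral gives `M_p' = -M_{p+1}`, and integrating `d/dt (t^ν exp(-t²/2 - bt))` over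
`(0, ∞)` gives `M_{ν+1}(b) = ν M_{ν-1}(b) - b M_ν(b)`; together these say that `φ` solves the
homogeneous Ornstein–Uhlenbeck equation.

Because `β` is decreasing, `β(y) ≤ β(c) < x` for `y ∈ [c, 1]`, so every `u(x; y)` in the integral
defining `F(x, c)` is on its continuation branch. As `G(x; y)` is affine in `Φ'(y)`, its integral
over `[c, 1]` is affine in `x` with coefficients in `Φ(1) - Φ(c) = -Φ(c)`; the remaining terms add
up to `φ(x)` times a constant. Near `x`, `F(·, c)` is thus an affine function plus a multiple of
`φ`, and the affine part alone produces the right-hand side `-λΦ(c)x`.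
-/

open Topology

noncomputable def gaussMoment (p b : ℝ) : ℝ :=
  ∫ t in Ioi (0 : ℝ), t ^ p * exp (-t ^ 2 / 2 - b * t)

lemma continuousOn_rpow_mul_exp (p b : ℝ) :
    ContinuousOn (fun t : ℝ => t ^ p * exp (-t ^ 2 / 2 - b * t)) (Ioi 0) := by
  intro t ht
  exact ((continuousAt_rpow_const t p (Or.inl ht.ne')).mul (by fun_prop)).continuousWithinAt

lemma integrableOn_rpow_mul_exp {p : ℝ} (hp : -1 < p) (b : ℝ) :
    IntegrableOn (fun t : ℝ => t ^ p * exp (-t ^ 2 / 2 - b * t)) (Ioi 0) := by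
  refine Integrable.mono'
    ((integrableOn_rpow_mul_exp_neg_mul_sq (by norm_num : (0 : ℝ) < 1 / 4) hp).const_mul
      (exp (b ^ 2)))
    ((continuousOn_rpow_mul_exp p b).aestronglyMeasurable measurableSet_Ioi) ?_
  filter_upwards [ae_restrict_mem measurableSet_Ioi] with t (ht : 0 < t)
  have hexp : exp (-t ^ 2 / 2 - b * t) ≤ exp (b ^ 2) * exp (-(1 / 4) * t ^ 2) := by
    rw [← exp_add, exp_le_exp]
    nlinarith [sq_nonneg (t / 2 + b)]
  rw [norm_of_nonneg (by positivity), mul_left_comm]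
  exact mul_le_mul_of_nonneg_left hexp (rpow_nonneg ht.le p)

lemma gaussMoment_pos {p : ℝ} (hp : -1 < p) (b : ℝ) : 0 < gaussMoment p b := by
  refine (setIntegral_pos_iff_support_of_nonneg_ae ?_ (integrableOn_rpow_mul_exp hp b)).2 ?_
  · filter_upwards [ae_restrict_mem measurableSet_Ioi] with t (ht : 0 < t)
    positivity
  · have hsupp : Ioi (0 : ℝ) ⊆
        Function.support (fun t : ℝ => t ^ p * exp (-t ^ 2 / 2 - b * t)) ∩ Ioi 0 :=
      fun t (ht : 0 < t) => ⟨(by positivity : 0 < t ^ p * exp (-t ^ 2 / 2 - b * t)).ne', ht⟩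
    exact (by simp : (0 : ENNReal) < volume (Ioi (0 : ℝ))).trans_le (measure_mono hsupp)

lemma hasDerivAt_gaussMoment {p : ℝ} (hp : -1 < p) (b : ℝ) :
    HasDerivAt (gaussMoment p) (-gaussMoment (p + 1) b) b := by
  have hderiv := hasDerivAt_integral_of_dominated_loc_of_deriv_le
    (μ := volume.restrict (Ioi 0)) (x₀ := b)
    (F := fun b t => t ^ p * exp (-t ^ 2 / 2 - b * t))
    (F' := fun b t => -(t ^ (p + 1) * exp (-t ^ 2 / 2 - b * t)))
    (bound := fun t => t ^ (p + 1) * exp (-t ^ 2 / 2 - (b - 1) * t))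
    (Metric.ball_mem_nhds b one_pos)
    (Eventually.of_forall fun b' =>
      (continuousOn_rpow_mul_exp p b').aestronglyMeasurable measurableSet_Ioi)
    (integrableOn_rpow_mul_exp hp b)
    ((continuousOn_rpow_mul_exp (p + 1) b).aestronglyMeasurable measurableSet_Ioi).neg
    ?_ (integrableOn_rpow_mul_exp (by linarith) (b - 1)) ?_
  · unfold gaussMoment
    rw [← integral_neg]
    exact hderiv.2
  · filter_upwards [ae_restrict_mem measurableSet_Ioi] with t (ht : 0 < t) b' hb'
    rw [Metric.mem_ball, Real.dist_eq, abs_lt] at hb'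
    rw [norm_neg, norm_of_nonneg (by positivity)]
    gcongr
    nlinarith
  · filter_upwards [ae_restrict_mem measurableSet_Ioi] with t (ht : 0 < t) b' _
    have hexp : HasDerivAt (fun b : ℝ => exp (-t ^ 2 / 2 - b * t))
        (exp (-t ^ 2 / 2 - b' * t) * -t) b' := by
      simpa using ((hasDerivAt_mul_const t).const_sub (-t ^ 2 / 2)).exp
    refine (hexp.const_mul (t ^ p)).congr_deriv ?_
    rw [rpow_add_one ht.ne']
    ring

lemma gaussMoment_add_one {ν : ℝ} (hν : 0 < ν) (b : ℝ) :
    gaussMoment (ν + 1) b = ν * gaussMoment (ν - 1) b - b * gaussMoment ν b := by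
  have i₁ := integrableOn_rpow_mul_exp (p := ν - 1) (by linarith) b
  have i₂ := integrableOn_rpow_mul_exp (p := ν + 1) (by linarith) b
  have i₃ := integrableOn_rpow_mul_exp (p := ν) (by linarith) b
  have hderiv : ∀ t ∈ Ioi (0 : ℝ), HasDerivAt (fun t => t ^ ν * exp (-t ^ 2 / 2 - b * t))
      (ν * (t ^ (ν - 1) * exp (-t ^ 2 / 2 - b * t)) - t ^ (ν + 1) * exp (-t ^ 2 / 2 - b * t)
        - b * (t ^ ν * exp (-t ^ 2 / 2 - b * t))) t := by
    intro t (ht : 0 < t)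
    have hexp : HasDerivAt (fun t => exp (-t ^ 2 / 2 - b * t))
        (exp (-t ^ 2 / 2 - b * t) * (-t - b)) t := by
      have := ((hasDerivAt_pow 2 t).neg.div_const 2).sub ((hasDerivAt_id t).const_mul b)
      exact (this.congr_deriv (by norm_num; ring)).exp
    refine ((hasDerivAt_rpow_const (p := ν) (Or.inl ht.ne')).mul hexp).congr_deriv ?_
    rw [rpow_add_one ht.ne']
    ring
  have hcont : ContinuousWithinAt (fun t => t ^ ν * exp (-t ^ 2 / 2 - b * t)) (Ici 0) 0 :=
    ((continuousAt_rpow_const 0 ν (Or.inr hν.le)).mul (by fun_prop)).continuousWithinAt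
  have hdecay : Tendsto (fun t => t ^ ν * exp (-t ^ 2 / 2 - b * t)) atTop (𝓝 0) := by
    refine squeeze_zero' ?_ ?_ (tendsto_rpow_mul_exp_neg_mul_atTop_nhds_zero ν 1 one_pos)
    · filter_upwards [eventually_ge_atTop 0] with t ht
      positivity
    · filter_upwards [eventually_ge_atTop (2 * (|b| + 1))] with t ht
      have ht₀ : 0 ≤ t := by linarith [abs_nonneg b]
      gcongr
      nlinarith [neg_abs_le b]
  have hparts := integral_Ioi_of_hasDerivAt_of_tendsto hcont hderiv
    (((i₁.const_mul ν).sub i₂).sub (i₃.const_mul b)) hdecay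
  rw [integral_sub _ (i₃.const_mul b), integral_sub (i₁.const_mul ν) i₂,
    integral_const_mul, integral_const_mul, zero_rpow hν.ne'] at hparts
  · simp only [gaussMoment]
    linarith
  · exact (i₁.const_mul ν).sub i₂

noncomputable def ouOperator (lam th mu sig : ℝ) (f : ℝ → ℝ) (x : ℝ) : ℝ :=
  1 / 2 * sig ^ 2 * deriv (deriv f) x + th * (mu - x) * deriv f x - lam * f x

lemma ouOperator_congr {lam th mu sig x : ℝ} {f g : ℝ → ℝ} (h : f =ᶠ[𝓝 x] g) :
    ouOperator lam th mu sig f x = ouOperator lam th mu sig g x := by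
  rw [ouOperator, ouOperator, h.deriv.deriv_eq, h.deriv_eq, h.eq_of_nhds]

section OrnsteinUhlenbeck

variable {lam th : ℝ} (mu sig : ℝ)

lemma OUphi_eq_gaussMoment (x : ℝ) :
    OUphi lam th mu sig x = gaussMoment (lam / th - 1) (√(2 * th) / sig * (x - mu)) := by
  simp only [OUphi, gaussMoment, mul_right_comm _ _ (x - mu)]

variable (hlam : 0 < lam) (hth : 0 < th)
include hlam hth

lemma hasDerivAt_OUphi (x : ℝ) :
    HasDerivAt (OUphi lam th mu sig)
      (-(√(2 * th) / sig) * gaussMoment (lam / th) (√(2 * th) / sig * (x - mu))) x := by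
  have hinner := ((hasDerivAt_id x).sub_const mu).const_mul (√(2 * th) / sig)
  have := (hasDerivAt_gaussMoment (p := lam / th - 1) (by linarith [div_pos hlam hth]) _).comp
    x hinner
  rw [funext (OUphi_eq_gaussMoment mu sig)]
  refine this.congr_deriv ?_
  simp only [id, sub_add_cancel]
  ring

lemma hasDerivAt_deriv_OUphi (x : ℝ) :
    HasDerivAt (deriv (OUphi lam th mu sig))
      ((√(2 * th) / sig) ^ 2 * gaussMoment (lam / th + 1) (√(2 * th) / sig * (x - mu))) x := by
  have hinner := ((hasDerivAt_id x).sub_const mu).const_mul (√(2 * th) / sig)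
  have := ((hasDerivAt_gaussMoment (p := lam / th) (by linarith [div_pos hlam hth]) _).comp
    x hinner).const_mul (-(√(2 * th) / sig))
  rw [funext fun y => (hasDerivAt_OUphi mu sig hlam hth y).deriv]
  refine this.congr_deriv ?_
  simp only [id]
  ring

lemma OUphi_pos (x : ℝ) : 0 < OUphi lam th mu sig x := by
  rw [OUphi_eq_gaussMoment]
  exact gaussMoment_pos (by linarith [div_pos hlam hth]) _

lemma continuous_OUphi : Continuous (OUphi lam th mu sig) :=
  continuous_iff_continuousAt.2 fun x => (hasDerivAt_OUphi mu sig hlam hth x).continuousAt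

variable {sig} (hsig : sig ≠ 0)
include hsig

lemma ouOperator_OUphi (x : ℝ) : ouOperator lam th mu sig (OUphi lam th mu sig) x = 0 := by
  have hscale : sig ^ 2 * (√(2 * th) / sig) ^ 2 = 2 * th := by
    rw [div_pow, sq_sqrt (by linarith)]
    field_simp
  have hrec := gaussMoment_add_one (div_pos hlam hth) (√(2 * th) / sig * (x - mu))
  have hν : lam / th * th = lam := div_mul_cancel₀ _ hth.ne'
  rw [ouOperator, (hasDerivAt_deriv_OUphi mu sig hlam hth x).deriv,
    (hasDerivAt_OUphi mu sig hlam hth x).deriv, OUphi_eq_gaussMoment]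
  linear_combination (1 / 2 * gaussMoment (lam / th + 1) (√(2 * th) / sig * (x - mu))) * hscale
    + th * hrec + gaussMoment (lam / th - 1) (√(2 * th) / sig * (x - mu)) * hν

lemma ouOperator_affine_add_mul_OUphi (A B C x : ℝ) :
    ouOperator lam th mu sig (fun w => A + B * (w - mu) + C * OUphi lam th mu sig w) x
      = -(lam * A + (lam + th) * B * (x - mu)) := by
  have hφ' := hasDerivAt_OUphi mu sig hlam hth
  have hφ'' := hasDerivAt_deriv_OUphi mu sig hlam hth x
  have hderiv : deriv (fun w => A + B * (w - mu) + C * OUphi lam th mu sig w)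
      = fun w => B + C * deriv (OUphi lam th mu sig) w := by
    funext w
    refine (((((hasDerivAt_id w).sub_const mu).const_mul B).const_add A).add
      ((hφ' w).const_mul C)).congr_deriv ?_ |>.deriv
    rw [(hφ' w).deriv, mul_one]
  have hzero := ouOperator_OUphi mu hlam hth hsig x
  rw [ouOperator] at hzero ⊢
  rw [hderiv, ((hφ''.const_mul C).const_add B).deriv]
  rw [hφ''.deriv] at hzero
  linear_combination C * hzero

end OrnsteinUhlenbeck

theorem AntitoneOn.integrableOn_comp_prodMk {β : ℝ → ℝ} {a b : ℝ} (hβ : AntitoneOn β (Icc a b))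
    {h : ℝ × ℝ → ℝ} (hh : Continuous h) : IntegrableOn (fun y => h (β y, y)) (Icc a b) := by
  have hmeas : AEStronglyMeasurable (fun y => h (β y, y)) (volume.restrict (Icc a b)) :=
    hh.comp_aestronglyMeasurable
      ((aemeasurable_restrict_of_antitoneOn measurableSet_Icc hβ).prodMk
        aemeasurable_id).aestronglyMeasurable
  obtain ⟨M, hM⟩ := (isCompact_Icc.prod isCompact_Icc).exists_bound_of_continuousOn
    (f := h) (s := Icc (β b) (β a) ×ˢ Icc a b) hh.continuousOn
  refine Integrable.mono' (integrableOn_const (C := M) measure_Icc_lt_top.ne) hmeas ?_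
  filter_upwards [ae_restrict_mem measurableSet_Icc] with y hy
  have hab : a ≤ b := hy.1.trans hy.2
  exact hM (β y, y) ⟨⟨hβ hy (right_mem_Icc.2 hab) hy.2, hβ (left_mem_Icc.2 hab) hy hy.1⟩, hy⟩

section ValueFunction

variable {lam th mu : ℝ} {Phi : ℝ → ℝ}

lemma Gfun_eq (hlam : lam ≠ 0) (hlt : lam + th ≠ 0) (x y : ℝ) :
    Gfun lam th mu Phi x y = x + (mu + lam * (x - mu) / (lam + th)) * deriv Phi y := by
  unfold Gfun kfun
  field_simp
  ring

lemma continuous_Gfun (hPhi : ContDiff ℝ 1 Phi) :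
    Continuous fun q : ℝ × ℝ => Gfun lam th mu Phi q.1 q.2 := by
  have := hPhi.continuous_deriv le_rfl
  unfold Gfun kfun
  fun_prop

lemma integral_Gfun (hlam : lam ≠ 0) (hlt : lam + th ≠ 0) (hPhi : ContDiff ℝ 1 Phi) (x c : ℝ) :
    ∫ y in c..1, Gfun lam th mu Phi x y
      = x * (1 - c) + (mu + lam * (x - mu) / (lam + th)) * (Phi 1 - Phi c) := by
  have hΦ' := (hPhi.continuous_deriv le_rfl).intervalIntegrable (μ := volume) c 1
  simp only [Gfun_eq hlam hlt]
  rw [intervalIntegral.integral_add intervalIntegrable_const (hΦ'.const_mul _),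
    intervalIntegral.integral_const, intervalIntegral.integral_const_mul,
    intervalIntegral.integral_deriv_eq_sub
      (fun y _ => (hPhi.differentiable one_ne_zero).differentiableAt) hΦ', smul_eq_mul]
  ring

lemma Ffun_eq_closedForm {sig : ℝ} {beta : ℝ → ℝ} {c x : ℝ} (hlam : 0 < lam) (hth : 0 < th)
    (hPhi : ContDiff ℝ 1 Phi) (hPhi1 : Phi 1 = 0) (hc : c ≤ 1)
    (hβ : AntitoneOn beta (Icc c 1)) (hx : beta c < x) :
    Ffun lam th mu sig Phi beta x c
      = mu * Phi c + (x - mu) * (lam * Phi c) / (lam + th)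
        + OUphi lam th mu sig x *
          ∫ y in c..1, Gfun lam th mu Phi (beta y) y / OUphi lam th mu sig (beta y) := by
  have hlt : lam + th ≠ 0 := (add_pos hlam hth).ne'
  have hG := continuous_Gfun (lam := lam) (th := th) (mu := mu) hPhi
  have hratio : IntervalIntegrable
      (fun y => Gfun lam th mu Phi (beta y) y / OUphi lam th mu sig (beta y)) volume c 1 := by
    rw [intervalIntegrable_iff_integrableOn_Icc_of_le hc]
    exact hβ.integrableOn_comp_prodMk
      (h := fun q => Gfun lam th mu Phi q.1 q.2 / OUphi lam th mu sig q.1)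
      (hG.div ((continuous_OUphi mu sig hlam hth).comp continuous_fst)
        fun q => (OUphi_pos mu sig hlam hth q.1).ne')
  have hu : EqOn (fun y => ufun lam th mu sig Phi (beta y) x y)
      (fun y => Gfun lam th mu Phi x y
        - Gfun lam th mu Phi (beta y) y / OUphi lam th mu sig (beta y) * OUphi lam th mu sig x)
      (uIcc c 1) := by
    intro y hy
    rw [uIcc_of_le hc] at hy
    exact if_pos ((hβ ⟨le_rfl, hc⟩ hy hy.1).trans_lt hx)
  have hGx : Continuous fun y => Gfun lam th mu Phi x y :=
    hG.comp (continuous_const.prodMk continuous_id)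
  rw [Ffun, intervalIntegral.integral_congr hu,
    intervalIntegral.integral_sub (hGx.intervalIntegrable c 1) (hratio.mul_const _),
    intervalIntegral.integral_mul_const, integral_Gfun hlam.ne' hlt hPhi, hPhi1]
  field_simp
  ring

end ValueFunction

theorem statement11_general (lam th mu sig : ℝ)
    (hlam : 0 < lam) (hth : 0 < th) (hsig : 0 < sig)
    (Phi : ℝ → ℝ) (hPhiC2 : ContDiff ℝ 2 Phi)
    (hPhi1 : Phi 1 = 0)
    (beta : ℝ → ℝ)
    (hbetadec : StrictAntiOn beta (Set.Icc (0:ℝ) 1)) :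
    ∀ c ∈ Set.Icc (0:ℝ) 1, ∀ x : ℝ, beta c < x →
      (Ffun lam th mu sig Phi beta x c
        = mu * Phi c + (x - mu) * (lam * Phi c) / (lam + th)
          + OUphi lam th mu sig x *
            ∫ y in c..(1:ℝ), Gfun lam th mu Phi (beta y) y / OUphi lam th mu sig (beta y)) ∧
      (1 / 2 * sig ^ 2 * deriv (deriv (fun x => Ffun lam th mu sig Phi beta x c)) x
        + th * (mu - x) * deriv (fun x => Ffun lam th mu sig Phi beta x c) x
        - lam * Ffun lam th mu sig Phi beta x c
      = -(lam * Phi c * x)) := by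
  intro c hc x hx
  have hβ : AntitoneOn beta (Icc c 1) := hbetadec.antitoneOn.mono (Icc_subset_Icc_left hc.1)
  have hclosed : ∀ w, beta c < w → _ := fun w hw =>
    Ffun_eq_closedForm (mu := mu) (sig := sig) hlam hth (hPhiC2.of_le one_le_two) hPhi1 hc.2 hβ hw
  refine ⟨hclosed x hx, ?_⟩
  set C := ∫ y in c..(1:ℝ), Gfun lam th mu Phi (beta y) y / OUphi lam th mu sig (beta y)
  have hnear : (fun w => Ffun lam th mu sig Phi beta w c) =ᶠ[𝓝 x]
      fun w => mu * Phi c + lam * Phi c / (lam + th) * (w - mu) + C * OUphi lam th mu sig w := by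
    filter_upwards [Ioi_mem_nhds hx] with w hw
    rw [hclosed w hw]
    ring
  change ouOperator lam th mu sig (fun w => Ffun lam th mu sig Phi beta w c) x = _
  rw [ouOperator_congr hnear, ouOperator_affine_add_mul_OUphi mu hlam hth hsig.ne']
  field_simp
  ring

/-- assume `k > 0` on `[0,1]` and let `β(c)` be the unique zero of
`H(·;c)` (with `β(c) < x₀(c)`), strictly decreasing in `c`. Then for every `c ∈ [0,1]` and
every `x > β(c)` the closed form
`F(x,c) = μΦ(c) + (x-μ)λΦ(c)/(λ+θ) + φ(x) ∫_c^1 G(β(y);y)/φ(β(y)) dy`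
holds, and consequently `(1/2)σ² F_xx + θ(μ-x) F_x - λF = -λΦ(c)x` for all `x > β(c)`. -/
theorem statement11 (lam th mu sig : ℝ)
    (hlam : 0 < lam) (hth : 0 < th) (hmu : 0 < mu) (hsig : 0 < sig)
    (Phi : ℝ → ℝ) (hPhiC2 : ContDiff ℝ 2 Phi)
    (hPhiconv : StrictConvexOn ℝ Set.univ Phi)
    (hPhi' : ∀ c ∈ Set.Icc (0:ℝ) 1, deriv Phi c < 0) (hPhi1 : Phi 1 = 0)
    (hk : ∀ c ∈ Set.Icc (0:ℝ) 1, 0 < kfun lam th Phi c)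
    (beta : ℝ → ℝ)
    (hbeta : ∀ c ∈ Set.Icc (0:ℝ) 1, Hfun lam th mu sig Phi (beta c) c = 0 ∧
      beta c < x0fun lam th mu Phi c ∧
      ∀ y : ℝ, Hfun lam th mu sig Phi y c = 0 → y = beta c)
    (hbetadec : StrictAntiOn beta (Set.Icc (0:ℝ) 1)) :
    ∀ c ∈ Set.Icc (0:ℝ) 1, ∀ x : ℝ, beta c < x →
      (Ffun lam th mu sig Phi beta x c
        = mu * Phi c + (x - mu) * (lam * Phi c) / (lam + th)
          + OUphi lam th mu sig x *
            ∫ y in c..(1:ℝ), Gfun lam th mu Phi (beta y) y / OUphi lam th mu sig (beta y)) ∧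
      (1 / 2 * sig ^ 2 * deriv (deriv (fun x => Ffun lam th mu sig Phi beta x c)) x
        + th * (mu - x) * deriv (fun x => Ffun lam th mu sig Phi beta x c) x
        - lam * Ffun lam th mu sig Phi beta x c
      = -(lam * Phi c * x)) :=
  statement11_general lam th mu sig hlam hth hsig Phi hPhiC2 hPhi1 beta hbetadec
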